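/- Let α ∈ ℝ be irrational and suppose α has large odd/odd gaps, i.e., for every C > 0 there exists n such that the n-th convergent p_n/q_n has both p_n and q_n odd and the partial quotient a_{n+1} ≥ C. Then the function m̃_α(η) := sup_{t ∈ [−η, η]} |2 + e^{iπt} + e^{iπαt}|^{−1} does not have positive increase. -/

import Mathlib

/-!
For a convergent `p/q` of `α` with `p`, `q` odd and `θ = qα - p`, the point `t₀ = (p + q)/(1 + α)`
lies within `|θ/(1 + α)|` of the odd integer `q` while `(1 + α) t₀` is even, so
`|2 + e^{iπt₀} + e^{iπαt₀}| ≲ θ²` and `m̃_α(q + O(1)) ≳ θ⁻²`. Conversely, if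
`|2 + e^{iπt} + e^{iπαt}|` were much smaller than `θ²` for some `|t| < q_{n+1} - 1`, then `t` and
`αt` would both be close to odd integers `k`, `l`, and `|kα - l| < |θ|` with `0 < |k| < q_{n+1}`
would contradict the best approximation property of convergents; hence `m̃_α ≲ θ⁻²` up to
`q_{n+1} - 1`. A large partial quotient `a_{n+1}` makes `q_{n+1}/q_n` large, so `m̃_α` grows by
at most a bounded factor over an arbitrarily long multiplicative range, which positive increase
forbids.
-/

/-- Complete quotients of the continued fraction expansion of `α`. -/
noncomputable def cfCQ (α : ℝ) : ℕ → ℝ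
  | 0 => α
  | n + 1 => 1 / (cfCQ α n - ⌊cfCQ α n⌋)

/-- Partial quotients `a n` of the continued fraction expansion of `α`. -/
noncomputable def cfA (α : ℝ) (n : ℕ) : ℤ := ⌊cfCQ α n⌋

/-- Numerators `p n` of the convergents of the continued fraction expansion of `α`. -/
noncomputable def cfP (α : ℝ) : ℕ → ℤ
  | 0 => cfA α 0
  | 1 => cfA α 0 * cfA α 1 + 1
  | n + 2 => cfA α (n + 2) * cfP α (n + 1) + cfP α n

/-- Denominators `q n` of the convergents of the continued fraction expansion of `α`. -/
noncomputable def cfQ (α : ℝ) : ℕ → ℤ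
  | 0 => 1
  | 1 => cfA α 1
  | n + 2 => cfA α (n + 2) * cfQ α (n + 1) + cfQ α n

/-- The function `m̃_α(η) = sup_{t ∈ [-η, η]} |2 + e^{iπt} + e^{iπαt}|⁻¹`. -/
noncomputable def mTilde (α η : ℝ) : ℝ :=
  ⨆ t : Set.Icc (-η) η,
    (‖2 + Complex.exp (Real.pi * ((t : ℝ) : ℂ) * Complex.I)
      + Complex.exp (Real.pi * (α : ℂ) * ((t : ℝ) : ℂ) * Complex.I)‖)⁻¹

open Real

noncomputable def cfTheta (α : ℝ) (n : ℕ) : ℝ := α * cfQ α n - cfP α n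

section ContinuedFraction

variable {α : ℝ}

lemma cfCQ_succ (α : ℝ) (n : ℕ) : cfCQ α (n + 1) = (cfCQ α n - cfA α n)⁻¹ := by
  rw [cfCQ, one_div, cfA]

lemma irrational_cfCQ (hα : Irrational α) (n : ℕ) : Irrational (cfCQ α n) := by
  induction n with
  | zero => exact hα
  | succ n ih => rw [cfCQ_succ]; exact (ih.sub_intCast _).inv

lemma cfA_lt_cfCQ (hα : Irrational α) (n : ℕ) : (cfA α n : ℝ) < cfCQ α n :=
  (Int.floor_le _).lt_of_ne ((irrational_cfCQ hα n).ne_int _).symm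

lemma one_lt_cfCQ_succ (hα : Irrational α) (n : ℕ) : 1 < cfCQ α (n + 1) := by
  have : cfCQ α n - 1 < cfA α n := Int.sub_one_lt_floor _
  rw [cfCQ_succ, one_lt_inv₀ (sub_pos.2 (cfA_lt_cfCQ hα n))]
  linarith

lemma one_le_cfA_succ (hα : Irrational α) (n : ℕ) : 1 ≤ cfA α (n + 1) :=
  Int.le_floor.2 (mod_cast (one_lt_cfCQ_succ hα n).le)

lemma one_le_cfQ (hα : Irrational α) (n : ℕ) : 1 ≤ cfQ α n := by
  induction n using Nat.twoStepInduction with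
  | zero => exact le_rfl
  | one => exact one_le_cfA_succ hα 0
  | more n ih₀ ih₁ =>
    have := one_le_cfA_succ hα (n + 1)
    rw [cfQ]; nlinarith

lemma cfA_mul_cfQ_le (hα : Irrational α) (n : ℕ) : cfA α (n + 1) * cfQ α n ≤ cfQ α (n + 1) := by
  cases n with
  | zero => simp [cfQ]
  | succ n => rw [cfQ]; linarith [one_le_cfQ hα n]

lemma cfP_mul_cfQ_sub_mul (α : ℝ) (n : ℕ) :
    cfP α (n + 1) * cfQ α n - cfP α n * cfQ α (n + 1) = (-1) ^ n := by
  induction n with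
  | zero => simp [cfP, cfQ]
  | succ n ih => rw [cfP, cfQ, pow_succ]; linear_combination -ih

lemma cfTheta_add_two (α : ℝ) (n : ℕ) :
    cfTheta α (n + 2) = cfA α (n + 2) * cfTheta α (n + 1) + cfTheta α n := by
  simp only [cfTheta, cfP, cfQ]; push_cast; ring

lemma cfTheta_ne_zero (hα : Irrational α) (n : ℕ) : cfTheta α n ≠ 0 := by
  have hq : cfQ α n ≠ 0 := by have := one_le_cfQ hα n; omega
  intro h
  exact (hα.mul_intCast hq).ne_int (cfP α n) (by unfold cfTheta at h; linarith)

lemma cfCQ_mul_cfTheta (hα : Irrational α) (n : ℕ) :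
    cfCQ α (n + 2) * cfTheta α (n + 1) = -cfTheta α n := by
  have hζ : ∀ m, cfCQ α (m + 1) * (cfCQ α m - cfA α m) = 1 := fun m => by
    rw [cfCQ_succ]; exact inv_mul_cancel₀ (sub_pos.2 (cfA_lt_cfCQ hα m)).ne'
  induction n with
  | zero =>
    have hθ₀ : cfTheta α 0 = cfCQ α 0 - cfA α 0 := by simp [cfTheta, cfQ, cfP, cfCQ]
    have hθ₁ : cfTheta α 1 = cfA α 1 * cfTheta α 0 - 1 := by
      simp only [cfTheta, cfQ, cfP]; push_cast; ring
    have hζ₀ := hζ 0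
    rw [← hθ₀] at hζ₀
    show cfCQ α 2 * cfTheta α 1 = -cfTheta α 0
    linear_combination cfCQ α 2 * hθ₁ + cfCQ α 2 * hζ₀ - cfTheta α 0 * hζ 1
  | succ n ih =>
    linear_combination cfCQ α (n + 1 + 2) * cfTheta_add_two α n + cfCQ α (n + 1 + 2) * ih
      - cfTheta α (n + 1) * hζ (n + 2)

lemma cfTheta_mul_cfTheta_succ_neg (hα : Irrational α) (n : ℕ) :
    cfTheta α n * cfTheta α (n + 1) < 0 := by
  rw [← neg_neg (cfTheta α n), ← cfCQ_mul_cfTheta hα n, neg_mul, neg_neg_iff_pos, mul_assoc]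
  exact mul_pos (one_pos.trans (one_lt_cfCQ_succ hα _)) (mul_self_pos.2 (cfTheta_ne_zero hα _))

lemma abs_cfTheta_le_one (hα : Irrational α) (n : ℕ) : |cfTheta α n| ≤ 1 := by
  induction n with
  | zero =>
    have : cfTheta α 0 = cfCQ α 0 - cfA α 0 := by simp [cfTheta, cfQ, cfP, cfCQ]
    have hfloor : cfCQ α 0 - 1 < cfA α 0 := Int.sub_one_lt_floor _
    rw [this, abs_of_pos (sub_pos.2 (cfA_lt_cfCQ hα 0))]
    linarith
  | succ n ih =>
    have h := congrArg abs (cfCQ_mul_cfTheta hα n)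
    rw [abs_mul, abs_neg, abs_of_pos (one_pos.trans (one_lt_cfCQ_succ hα _))] at h
    nlinarith [abs_nonneg (cfTheta α (n + 1)), one_lt_cfCQ_succ hα (n + 1)]

/-- Best approximation property of the convergents. -/
lemma abs_cfTheta_le_of_abs_lt_cfQ_succ (hα : Irrational α) (n : ℕ) {k m : ℤ} (hk : k ≠ 0)
    (hkq : |k| < cfQ α (n + 1)) : |cfTheta α n| ≤ |α * k - m| := by
  obtain ⟨x, y, hk_eq, hm_eq⟩ : ∃ x y : ℤ,
      k = x * cfQ α n + y * cfQ α (n + 1) ∧ m = x * cfP α n + y * cfP α (n + 1) := by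
    have hdet := cfP_mul_cfQ_sub_mul α n
    have hdd : ((-1 : ℤ) ^ n) ^ 2 = 1 := by rw [← pow_mul, mul_comm, pow_mul]; norm_num
    exact ⟨(-1) ^ n * (k * cfP α (n + 1) - m * cfQ α (n + 1)),
      (-1) ^ n * (m * cfQ α n - k * cfP α n),
      by linear_combination (-k) * hdd - k * (-1) ^ n * hdet,
      by linear_combination (-m) * hdd - m * (-1) ^ n * hdet⟩
  have hq₀ := one_le_cfQ hα n
  have hq₁ := one_le_cfQ hα (n + 1)
  have hx : x ≠ 0 := by
    rintro hx
    rw [hk_eq, hx, zero_mul, zero_add, abs_mul, abs_of_pos (a := cfQ α (n + 1)) (by omega)] at hkq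
    have : 1 ≤ |y| := Int.one_le_abs (by rintro rfl; simp_all)
    nlinarith
  have hxy : x * y ≤ 0 := by
    by_contra! hxy
    rw [hk_eq, abs_lt] at hkq
    rcases lt_or_gt_of_ne hx with hx' | hx'
    · nlinarith [neg_of_mul_pos_right hxy hx'.le]
    · nlinarith [pos_of_mul_pos_right hxy hx'.le]
  have hθ : α * k - m = x * cfTheta α n + y * cfTheta α (n + 1) := by
    rw [hk_eq, hm_eq]; unfold cfTheta; push_cast; ring
  have hsame : 0 ≤ (x * cfTheta α n) * (y * cfTheta α (n + 1)) := by
    have h1 : ((x * y : ℤ) : ℝ) ≤ 0 := mod_cast hxy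
    push_cast at h1
    nlinarith [cfTheta_mul_cfTheta_succ_neg hα n]
  have hx1 : (1 : ℝ) ≤ |(x : ℝ)| := by exact_mod_cast Int.one_le_abs hx
  calc |cfTheta α n| ≤ |(x : ℝ)| * |cfTheta α n| := le_mul_of_one_le_left (abs_nonneg _) hx1
    _ = |x * cfTheta α n| := (abs_mul _ _).symm
    _ ≤ |α * k - m| := by rw [hθ, ← sq_le_sq]; nlinarith

end ContinuedFraction

lemma cos_pi_mul_eq_neg_of_odd {k : ℤ} (hk : Odd k) (x : ℝ) :
    cos (π * x) = -cos (π * (x - k)) := by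
  obtain ⟨m, rfl⟩ := hk
  rw [show π * x = π * (x - ((2 * m + 1 : ℤ) : ℝ)) + π + m * (2 * π) by push_cast; ring,
    cos_add_int_mul_two_pi, cos_add_pi]

lemma sq_le_one_add_cos_pi_mul {k : ℤ} (hk : Odd k) {x : ℝ} (hx : |x - k| ≤ 1) :
    2 * (x - k) ^ 2 ≤ 1 + cos (π * x) := by
  have h := cos_le_one_sub_mul_cos_sq (x := π * (x - k))
    (by rw [abs_mul, abs_of_pos pi_pos]; nlinarith [pi_pos])
  rw [cos_pi_mul_eq_neg_of_odd hk]
  field_simp at h ⊢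
  nlinarith [pi_pos]

lemma exists_odd_abs_sub_le_one (x : ℝ) : ∃ k : ℤ, Odd k ∧ |x - k| ≤ 1 := by
  refine ⟨2 * round ((x - 1) / 2) + 1, odd_two_mul_add_one _, ?_⟩
  have h := abs_sub_round ((x - 1) / 2)
  rw [show x - ((2 * round ((x - 1) / 2) + 1 : ℤ) : ℝ) = 2 * ((x - 1) / 2 - round ((x - 1) / 2)) by
    push_cast; ring, abs_mul, abs_two]
  linarith

/-- `mTilde α η` is definitionally `⨆ t : Set.Icc (-η) η, ‖expSum α t‖⁻¹`. -/
noncomputable def expSum (α t : ℝ) : ℂ :=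
  2 + Complex.exp (π * (t : ℂ) * Complex.I) + Complex.exp (π * (α : ℂ) * (t : ℂ) * Complex.I)

lemma expSum_re (α t : ℝ) :
    (expSum α t).re = (1 + cos (π * t)) + (1 + cos (π * (α * t))) := by
  simp only [expSum, mul_assoc, Complex.add_re, Complex.re_ofNat, Complex.exp_re, Complex.mul_re,
    Complex.ofReal_re, Complex.I_re, mul_zero, Complex.ofReal_im, Complex.I_im, mul_one, sub_self,
    Complex.mul_im, add_zero, zero_mul, exp_zero, one_mul]
  ring

lemma exists_sq_add_sq_le_norm_expSum (α t : ℝ) : ∃ k l : ℤ, Odd k ∧ |t - k| ≤ 1 ∧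
    2 * ((t - k) ^ 2 + (α * t - l) ^ 2) ≤ ‖expSum α t‖ := by
  obtain ⟨k, hk, hkt⟩ := exists_odd_abs_sub_le_one t
  obtain ⟨l, hl, hlt⟩ := exists_odd_abs_sub_le_one (α * t)
  refine ⟨k, l, hk, hkt, ?_⟩
  calc 2 * ((t - k) ^ 2 + (α * t - l) ^ 2)
      ≤ (1 + cos (π * t)) + (1 + cos (π * (α * t))) := by
        linarith [sq_le_one_add_cos_pi_mul hk hkt, sq_le_one_add_cos_pi_mul hl hlt]
    _ = (expSum α t).re := (expSum_re α t).symm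
    _ ≤ ‖expSum α t‖ := Complex.re_le_norm _

lemma expSum_ne_zero {α : ℝ} (hα : Irrational α) (t : ℝ) : expSum α t ≠ 0 := by
  intro h
  obtain ⟨k, l, hk, -, hle⟩ := exists_sq_add_sq_le_norm_expSum α t
  rw [h, norm_zero] at hle
  have hk0 : k ≠ 0 := by rintro rfl; simp at hk
  have ht : t = k := by nlinarith [sq_nonneg (t - k), sq_nonneg (α * t - l)]
  have hαt : α * t = l := by nlinarith [sq_nonneg (t - k), sq_nonneg (α * t - l)]
  exact (hα.mul_intCast hk0).ne_int l (ht ▸ hαt)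

lemma norm_expSum_le {α t : ℝ} {N q : ℤ} (hN : Even N) (ht : (1 + α) * t = N) (hq : Odd q) :
    ‖expSum α t‖ ≤ π ^ 2 * (t - q) ^ 2 := by
  obtain ⟨M, rfl⟩ := hN
  have hexp : Complex.exp (π * (α : ℂ) * (t : ℂ) * Complex.I)
      = Complex.exp (-(π * t : ℂ) * Complex.I) := by
    have ht' : (α : ℂ) * t = 2 * M - t := by
      have := congrArg (fun r : ℝ => (r : ℂ)) ht
      push_cast at this
      linear_combination this
    rw [show (π : ℂ) * α * t * Complex.I = M * (2 * π * Complex.I) + -(π * t : ℂ) * Complex.I by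
      linear_combination (π * Complex.I : ℂ) * ht', Complex.exp_add,
      Complex.exp_int_mul_two_pi_mul_I, one_mul]
  have hS : expSum α t = ((2 + 2 * cos (π * t) : ℝ) : ℂ) := by
    rw [expSum, hexp, add_assoc, ← Complex.two_cos]
    push_cast; ring
  rw [hS, Complex.norm_real, norm_eq_abs, cos_pi_mul_eq_neg_of_odd hq,
    abs_of_nonneg (by linarith [cos_le_one (π * (t - q))])]
  nlinarith [one_sub_sq_div_two_le_cos (x := π * (t - q))]

section MTilde

variable {α : ℝ}

lemma bddAbove_range_inv_norm_expSum (hα : Irrational α) (η : ℝ) :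
    BddAbove (Set.range fun t : Set.Icc (-η) η => ‖expSum α t‖⁻¹) := by
  have hcont : Continuous fun t => ‖expSum α t‖⁻¹ :=
    (by unfold expSum; fun_prop : Continuous (expSum α)).norm.inv₀
      fun t => norm_ne_zero_iff.2 (expSum_ne_zero hα t)
  simpa only [Set.image_eq_range] using (isCompact_Icc.image hcont).bddAbove

lemma inv_norm_expSum_le_mTilde (hα : Irrational α) {t η : ℝ} (ht : |t| ≤ η) :
    ‖expSum α t‖⁻¹ ≤ mTilde α η :=
  le_ciSup (bddAbove_range_inv_norm_expSum hα η) ⟨t, abs_le.1 ht⟩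

lemma mTilde_pos (hα : Irrational α) {η : ℝ} (hη : 0 ≤ η) : 0 < mTilde α η :=
  (inv_pos.2 (norm_pos_iff.2 (expSum_ne_zero hα 0))).trans_le
    (inv_norm_expSum_le_mTilde hα (by simpa using hη))

lemma mTilde_le_inv {η b : ℝ} (hη : 0 ≤ η) (hb : 0 < b)
    (h : ∀ t, |t| ≤ η → b ≤ ‖expSum α t‖) : mTilde α η ≤ b⁻¹ := by
  have : Nonempty (Set.Icc (-η) η) := ⟨⟨0, by simpa using hη⟩⟩
  exact ciSup_le fun t => inv_anti₀ hb (h t (abs_le.2 t.2))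

lemma le_mTilde_of_odd (hα : Irrational α) {n : ℕ} (hp : Odd (cfP α n)) (hq : Odd (cfQ α n))
    {η : ℝ} (hη : cfQ α n + |1 + α|⁻¹ ≤ η) :
    (1 + α) ^ 2 / (π ^ 2 * cfTheta α n ^ 2) ≤ mTilde α η := by
  have h1α : 1 + α ≠ 0 := fun h => hα.ne_int (-1) (by push_cast; linarith)
  have hθ := cfTheta_ne_zero hα n
  set t₀ := ((cfP α n + cfQ α n : ℤ) : ℝ) / (1 + α)
  have ht₀ : (1 + α) * t₀ = ((cfP α n + cfQ α n : ℤ) : ℝ) := mul_div_cancel₀ _ h1α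
  have hdist : t₀ - cfQ α n = -cfTheta α n / (1 + α) := by
    rw [eq_div_iff h1α, cfTheta]; push_cast at ht₀ ⊢; linear_combination ht₀
  have hnorm := norm_expSum_le (hp.add_odd hq) ht₀ hq
  have ht₀η : |t₀| ≤ η := by
    have hq₁ : (1 : ℝ) ≤ cfQ α n := mod_cast one_le_cfQ hα n
    calc |t₀| = |(cfQ α n : ℝ) + (t₀ - cfQ α n)| := by ring_nf
      _ ≤ |(cfQ α n : ℝ)| + |t₀ - cfQ α n| := abs_add_le _ _
      _ ≤ cfQ α n + |1 + α|⁻¹ := by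
        rw [abs_of_pos (by linarith), hdist, abs_div, abs_neg, div_eq_mul_inv]
        nlinarith [abs_cfTheta_le_one hα n, inv_nonneg.2 (abs_nonneg (1 + α))]
      _ ≤ η := hη
  calc (1 + α) ^ 2 / (π ^ 2 * cfTheta α n ^ 2) = (π ^ 2 * (t₀ - cfQ α n) ^ 2)⁻¹ := by
        rw [hdist]; field_simp
    _ ≤ ‖expSum α t₀‖⁻¹ := inv_anti₀ (norm_pos_iff.2 (expSum_ne_zero hα t₀)) hnorm
    _ ≤ mTilde α η := inv_norm_expSum_le_mTilde hα ht₀η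

lemma mTilde_le_of_lt_cfQ (hα : Irrational α) (n : ℕ) {H : ℝ} (hH : 0 ≤ H)
    (hHq : H + 1 < cfQ α (n + 1)) : mTilde α H ≤ (1 + |α|) ^ 2 / (2 * cfTheta α n ^ 2) := by
  have hθ := cfTheta_ne_zero hα n
  rw [← inv_div]
  refine mTilde_le_inv hH (by positivity) fun t ht => ?_
  obtain ⟨k, l, hk, hkt, hS⟩ := exists_sq_add_sq_le_norm_expSum α t
  have hkq : |k| < cfQ α (n + 1) := by
    have : |(k : ℝ)| < cfQ α (n + 1) := by
      linarith [abs_sub_abs_le_abs_sub (k : ℝ) t, abs_sub_comm (k : ℝ) t]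
    exact_mod_cast this
  have hbest := abs_cfTheta_le_of_abs_lt_cfQ_succ hα n (m := l) (by rintro rfl; simp at hk) hkq
  have htri : |α * k - l| ≤ |α| * |t - k| + |α * t - l| := by
    calc |α * k - l| = |-(α * (t - k)) + (α * t - l)| := by ring_nf
      _ ≤ |α| * |t - k| + |α * t - l| := by
        rw [← abs_mul, ← abs_neg (α * (t - k))]; exact abs_add_le _ _
  have hθ_sq : cfTheta α n ^ 2 ≤ (|α| * |t - k| + |α * t - l|) ^ 2 := by
    rw [← sq_abs]; exact pow_le_pow_left₀ (abs_nonneg _) (hbest.trans htri) 2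
  have hcs : (|α| * |t - k| + |α * t - l|) ^ 2
      ≤ (1 + |α|) ^ 2 * ((t - k) ^ 2 + (α * t - l) ^ 2) := by
    rw [← sq_abs (t - k), ← sq_abs (α * t - l)]
    have ha := abs_nonneg α
    have hu := abs_nonneg (t - k)
    have hv := abs_nonneg (α * t - l)
    nlinarith [mul_nonneg ha (sq_nonneg (|t - k| - |α * t - l|)), mul_nonneg ha (mul_nonneg hu hv),
      sq_nonneg |t - k|, sq_nonneg (|α| * |α * t - l|)]
  rw [div_le_iff₀ (by positivity)]
  nlinarith [mul_le_mul_of_nonneg_left hS (sq_nonneg (1 + |α|))]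

lemma mTilde_le_mul_mTilde_of_odd (hα : Irrational α) {n : ℕ} (hp : Odd (cfP α n))
    (hq : Odd (cfQ α n)) {η H : ℝ} (hη : cfQ α n + |1 + α|⁻¹ ≤ η) (hH : 0 ≤ H)
    (hHq : H + 1 < cfQ α (n + 1)) :
    mTilde α H ≤ π ^ 2 * (1 + |α|) ^ 2 / (2 * (1 + α) ^ 2) * mTilde α η := by
  have h1α : 1 + α ≠ 0 := fun h => hα.ne_int (-1) (by push_cast; linarith)
  have hθ := cfTheta_ne_zero hα n
  calc mTilde α H ≤ (1 + |α|) ^ 2 / (2 * cfTheta α n ^ 2) := mTilde_le_of_lt_cfQ hα n hH hHq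
    _ = π ^ 2 * (1 + |α|) ^ 2 / (2 * (1 + α) ^ 2) * ((1 + α) ^ 2 / (π ^ 2 * cfTheta α n ^ 2)) := by
      field_simp
    _ ≤ _ := by gcongr; exact le_mTilde_of_odd hα hp hq hη

end MTilde

/-- If the irrational `α` has large odd/odd gaps, then `m̃_α` does not have
positive increase. -/
theorem mTilde_not_positive_increase_of_large_oddOdd_gaps (α : ℝ) (hα : Irrational α)
    (hgaps : ∀ C : ℝ, 0 < C → ∃ n : ℕ, Odd (cfP α n) ∧ Odd (cfQ α n) ∧
      C ≤ (cfA α (n + 1) : ℝ)) :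
    ¬ ∃ β : ℝ, 0 < β ∧ ∃ c : ℝ, 0 < c ∧ c ≤ 1 ∧ ∃ η₀ : ℝ, 0 < η₀ ∧
      ∀ lam η : ℝ, 1 ≤ lam → η₀ ≤ η → c * lam ^ β * mTilde α η ≤ mTilde α (lam * η) := by
  rintro ⟨β, hβ, c, hc, -, η₀, hη₀, hinc⟩
  set K := π ^ 2 * (1 + |α|) ^ 2 / (2 * (1 + α) ^ 2)
  obtain ⟨lam, hlamK, hlam⟩ := (((tendsto_rpow_atTop hβ).const_mul_atTop hc).eventually_gt_atTop K
    |>.and (Filter.eventually_ge_atTop 1)).exists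
  have hw : 0 ≤ |1 + α|⁻¹ := inv_nonneg.2 (abs_nonneg _)
  set D := 1 + |1 + α|⁻¹ + η₀
  obtain ⟨n, hp, hq, hgap⟩ := hgaps (lam * D + 2) (by nlinarith)
  have hq₁ : (1 : ℝ) ≤ cfQ α n := mod_cast one_le_cfQ hα n
  set η := (cfQ α n : ℝ) + |1 + α|⁻¹ + η₀
  have hη₀η : η₀ ≤ η := by linarith
  have hlamη : lam * η + 1 < cfQ α (n + 1) := by
    have hq₂ : (cfA α (n + 1) : ℝ) * cfQ α n ≤ cfQ α (n + 1) := mod_cast cfA_mul_cfQ_le hα n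
    have : η ≤ D * cfQ α n := by nlinarith
    nlinarith
  have hη : 0 < mTilde α η := mTilde_pos hα (by linarith)
  have hK := (hinc lam η hlam hη₀η).trans
    (mTilde_le_mul_mTilde_of_odd hα hp hq (η := η) (by linarith) (by nlinarith) hlamη)
  nlinarith
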